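/- arXiv:0809.3647 — 3 statements merged into one kernel-verified Lean document; each statement's English description precedes it below -/
import Mathlib

section
/- Let E be a real inner product space, K ⊆ E a convex compact set, V : E → ℝ continuous and strictly convex on K (StrictConvexOn ℝ K V), γ ∈ (0,1) fixed, and L ∈ ℝ. Let (a p) and (b p) be sequences in K such that for all p, V (b p) ≤ V (γ • a p + (1−γ) • b p) ≤ V (a p), and such that V (a p) → L and V (b p) → L. Then ‖a p − b p‖ → 0. -/
/-!
Along the sequence, the convexity defect `γ V(a) + (1-γ) V(b) - V(γ a + (1-γ) b)` tends to
`γ L + (1-γ) L - L = 0`, since the middle value is squeezed between `V (b p)` and `V (a p)`.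
On the compact set of pairs in `K × K` at distance at least `ε`, the defect is continuous and,
by strict convexity, positive, hence bounded below by some `δ > 0`; so eventually
`‖a p - b p‖ < ε`.
-/

open Filter Topology

theorem IsCompact.tendsto_zero_of_tendsto_zero {X ι : Type*} [TopologicalSpace X]
    {S : Set X} (hS : IsCompact S) {f g : X → ℝ} (hf : Continuous f) (hg : Continuous g)
    (hg_nonneg : ∀ x ∈ S, 0 ≤ g x) (hpos : ∀ x ∈ S, 0 < g x → 0 < f x)
    {l : Filter ι} {u : ι → X} (hu : ∀ i, u i ∈ S) (hfu : Tendsto (f ∘ u) l (𝓝 0)) :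
    Tendsto (g ∘ u) l (𝓝 0) := by
  refine tendsto_order.2 ⟨fun c hc => .of_forall fun i => hc.trans_le (hg_nonneg _ (hu i)),
    fun ε hε => ?_⟩
  have hT : IsCompact (S ∩ {x | ε ≤ g x}) := hS.inter_right (isClosed_le continuous_const hg)
  obtain ⟨δ, hδ, hδf⟩ := hT.exists_forall_le' hf.continuousOn
    fun x hx => hpos x hx.1 (hε.trans_le hx.2)
  filter_upwards [(tendsto_order.1 hfu).2 δ hδ] with i hi
  by_contra! hgi
  exact (hδf (u i) ⟨hu i, hgi⟩).not_gt hi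

theorem StrictConvexOn.tendsto_norm_sub_of_tendsto_defect {E ι : Type*}
    [NormedAddCommGroup E] [NormedSpace ℝ E] {K : Set E} (hK : IsCompact K) {V : E → ℝ}
    (hVcont : Continuous V) (hVsc : StrictConvexOn ℝ K V) {γ : ℝ} (hγ : γ ∈ Set.Ioo (0 : ℝ) 1)
    {l : Filter ι} {a b : ι → E} (ha : ∀ i, a i ∈ K) (hb : ∀ i, b i ∈ K)
    (hdefect : Tendsto (fun i => γ * V (a i) + (1 - γ) * V (b i) - V (γ • a i + (1 - γ) • b i))
      l (𝓝 0)) :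
    Tendsto (fun i => ‖a i - b i‖) l (𝓝 0) := by
  refine (hK.prod hK).tendsto_zero_of_tendsto_zero (u := fun i => (a i, b i))
    (f := fun z => γ * V z.1 + (1 - γ) * V z.2 - V (γ • z.1 + (1 - γ) • z.2))
    (g := fun z => ‖z.1 - z.2‖) (by fun_prop) (by fun_prop) (fun _ _ => norm_nonneg _)
    (fun z hz hpos => ?_) (fun i => ⟨ha i, hb i⟩) hdefect
  have hne : z.1 ≠ z.2 := sub_ne_zero.1 (norm_pos_iff.1 hpos)
  exact sub_pos.2 (hVsc.2 hz.1 hz.2 hne hγ.1 (sub_pos.2 hγ.2) (add_sub_cancel _ _))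

theorem squeeze_strict_convex_dist_tendsto_zero_general
    {E : Type*} [NormedAddCommGroup E] [InnerProductSpace ℝ E]
    (K : Set E) (hKcpt : IsCompact K)
    (V : E → ℝ) (hVcont : Continuous V) (hVsc : StrictConvexOn ℝ K V)
    (γ : ℝ) (hγ : γ ∈ Set.Ioo (0 : ℝ) 1) (L : ℝ)
    (a b : ℕ → E) (ha : ∀ p, a p ∈ K) (hb : ∀ p, b p ∈ K)
    (hlow : ∀ p, V (b p) ≤ V (γ • a p + (1 - γ) • b p))
    (hhigh : ∀ p, V (γ • a p + (1 - γ) • b p) ≤ V (a p))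
    (hVa : Tendsto (fun p => V (a p)) atTop (nhds L))
    (hVb : Tendsto (fun p => V (b p)) atTop (nhds L)) :
    Tendsto (fun p => ‖a p - b p‖) atTop (nhds 0) := by
  have hVmid : Tendsto (fun p => V (γ • a p + (1 - γ) • b p)) atTop (𝓝 L) :=
    tendsto_of_tendsto_of_tendsto_of_le_of_le hVb hVa hlow hhigh
  have hdefect := ((hVa.const_mul γ).add (hVb.const_mul (1 - γ))).sub hVmid
  rw [show γ * L + (1 - γ) * L - L = 0 by ring] at hdefect
  exact hVsc.tendsto_norm_sub_of_tendsto_defect hKcpt hVcont hγ ha hb hdefect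

/-- Key sequential lemma in the optimality proof of the Jacobi DMPC algorithm:
if the costs of the iterates `a p`, of the block minimizers `b p`, and of the
intermediate convex combinations all converge to the same limit `L`, then the
distance between `a p` and `b p` tends to zero (by strict convexity of `V`). -/
theorem squeeze_strict_convex_dist_tendsto_zero
    {E : Type*} [NormedAddCommGroup E] [InnerProductSpace ℝ E]
    (K : Set E) (hKconv : Convex ℝ K) (hKcpt : IsCompact K)
    (V : E → ℝ) (hVcont : Continuous V) (hVsc : StrictConvexOn ℝ K V)
    (γ : ℝ) (hγ : γ ∈ Set.Ioo (0 : ℝ) 1) (L : ℝ)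
    (a b : ℕ → E) (ha : ∀ p, a p ∈ K) (hb : ∀ p, b p ∈ K)
    (hlow : ∀ p, V (b p) ≤ V (γ • a p + (1 - γ) • b p))
    (hhigh : ∀ p, V (γ • a p + (1 - γ) • b p) ≤ V (a p))
    (hVa : Tendsto (fun p => V (a p)) atTop (nhds L))
    (hVb : Tendsto (fun p => V (b p)) atTop (nhds L)) :
    Tendsto (fun p => ‖a p - b p‖) atTop (nhds 0) :=
  squeeze_strict_convex_dist_tendsto_zero_general K hKcpt V hVcont hVsc γ hγ L a b ha hb hlow hhigh
    hVa hVb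
end

section
/- Let H : Matrix (Fin n) (Fin n) ℝ be symmetric and positive semidefinite, g ∈ ℝ^n, c ∈ ℝ, and define V u = ⟪u, H.mulVec u⟫ + 2⟪g, u⟫ + c. Let blk : Fin n → Fin M partition the coordinates among M subsystems, let Ω ⊆ ℝ^n, and let v ∈ Ω. Suppose that for every subsystem i ∈ Fin M and every u ∈ Ω the block first-order condition holds: ∑_{j : blk j = i} (H.mulVec v + g) j * (u j − v j) ≥ 0. Then for every u ∈ Ω, ⟪H.mulVec v + g, u − v⟫ ≥ 0 and V u ≥ V v; i.e., v is a global minimizer of V over Ω. -/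
/-!
The block conditions sum, over the partition of coordinates, to the global first-order
condition `⟪Hv + g, u - v⟫ ≥ 0`. With `w = u - v` and `H` symmetric,
`V (v + w) - V v = 2 ⟪Hv + g, w⟫ + ⟪w, Hw⟫`, and both terms are nonnegative.
-/

open Matrix

section QuadraticForm

variable {ι R : Type*} [Fintype ι]

lemma Matrix.IsSymm.dotProduct_mulVec_comm [CommSemiring R] {H : Matrix ι ι R} (hH : H.IsSymm)
    (v w : ι → R) : v ⬝ᵥ H *ᵥ w = w ⬝ᵥ H *ᵥ v := by
  rw [dotProduct_mulVec, ← mulVec_transpose, hH.eq, dotProduct_comm]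

lemma Matrix.IsSymm.quadratic_add [CommRing R] {H : Matrix ι ι R} (hH : H.IsSymm)
    (g v w : ι → R) :
    (v + w) ⬝ᵥ H *ᵥ (v + w) + 2 * (g ⬝ᵥ (v + w))
      = v ⬝ᵥ H *ᵥ v + 2 * (g ⬝ᵥ v) + 2 * ((H *ᵥ v + g) ⬝ᵥ w) + w ⬝ᵥ H *ᵥ w := by
  simp only [mulVec_add, dotProduct_add, add_dotProduct, hH.dotProduct_mulVec_comm v w,
    dotProduct_comm g w, dotProduct_comm (H *ᵥ v) w]
  ring

lemma Matrix.PosSemidef.quadratic_le_of_gradient_dotProduct_nonneg {H : Matrix ι ι ℝ}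
    (hH : H.PosSemidef) (g v u : ι → ℝ) (hvu : 0 ≤ (H *ᵥ v + g) ⬝ᵥ (u - v)) :
    v ⬝ᵥ H *ᵥ v + 2 * (g ⬝ᵥ v) ≤ u ⬝ᵥ H *ᵥ u + 2 * (g ⬝ᵥ u) := by
  have hcurv : 0 ≤ (u - v) ⬝ᵥ H *ᵥ (u - v) := by
    simpa using hH.dotProduct_mulVec_nonneg (u - v)
  have hexpand := (isHermitian_iff_isSymm.mp hH.isHermitian).quadratic_add g v (u - v)
  rw [add_sub_cancel] at hexpand
  linarith

lemma dotProduct_eq_sum_fiberwise [AddCommMonoid R] [Mul R] {κ : Type*} [Fintype κ]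
    [DecidableEq κ] (blk : ι → κ) (x y : ι → R) :
    x ⬝ᵥ y = ∑ i, ∑ j ∈ Finset.univ.filter (fun j => blk j = i), x j * y j :=
  (Finset.sum_fiberwise _ _ _).symm

end QuadraticForm

theorem block_optimality_implies_global_optimality_general {n M : ℕ}
    (H : Matrix (Fin n) (Fin n) ℝ) (hHpsd : H.PosSemidef)
    (g : Fin n → ℝ) (c : ℝ)
    (V : (Fin n → ℝ) → ℝ)
    (hV : ∀ u, V u = u ⬝ᵥ H.mulVec u + 2 * (g ⬝ᵥ u) + c)
    (blk : Fin n → Fin M) (Ω : Set (Fin n → ℝ)) (v : Fin n → ℝ)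
    (hblock : ∀ i : Fin M, ∀ u ∈ Ω,
      ∑ j ∈ Finset.univ.filter (fun j => blk j = i),
        (H.mulVec v + g) j * (u j - v j) ≥ 0) :
    ∀ u ∈ Ω, (H.mulVec v + g) ⬝ᵥ (u - v) ≥ 0 ∧ V u ≥ V v := by
  intro u hu
  have hfirst : 0 ≤ (H *ᵥ v + g) ⬝ᵥ (u - v) := by
    rw [dotProduct_eq_sum_fiberwise blk]
    exact Finset.sum_nonneg fun i _ => hblock i u hu
  refine ⟨hfirst, ?_⟩
  rw [hV, hV]
  linarith [hHpsd.quadratic_le_of_gradient_dotProduct_nonneg g v u hfirst]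

/-- Summing the block first-order optimality conditions over the subsystems yields the
global first-order condition, and hence global optimality of `v` for the convex
quadratic cost `V` over the feasible set `Ω`. -/
theorem block_optimality_implies_global_optimality {n M : ℕ}
    (H : Matrix (Fin n) (Fin n) ℝ) (hHsymm : H.IsSymm) (hHpsd : H.PosSemidef)
    (g : Fin n → ℝ) (c : ℝ)
    (V : (Fin n → ℝ) → ℝ)
    (hV : ∀ u, V u = u ⬝ᵥ H.mulVec u + 2 * (g ⬝ᵥ u) + c)
    (blk : Fin n → Fin M) (Ω : Set (Fin n → ℝ)) (v : Fin n → ℝ) (hv : v ∈ Ω)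
    (hblock : ∀ i : Fin M, ∀ u ∈ Ω,
      ∑ j ∈ Finset.univ.filter (fun j => blk j = i),
        (H.mulVec v + g) j * (u j - v j) ≥ 0) :
    ∀ u ∈ Ω, (H.mulVec v + g) ⬝ᵥ (u - v) ≥ 0 ∧ V u ≥ V v :=
  block_optimality_implies_global_optimality_general H hHpsd g c V hV blk Ω v hblock
end

section
/- Let A : Matrix (Fin p) (Fin d) ℝ, b : Fin p → ℝ, and ℓ, v : Fin d → ℝ with v j ≥ 0 for all j. Define A⁺ entrywise by (A⁺) i j = max (A i j) 0. Then the box B(ℓ, ℓ+v) = {u : ℝ^d | ∀ j, ℓ j ≤ u j ∧ u j ≤ ℓ j + v j} is contained in the polyhedron Ω = {u : ℝ^d | ∀ i, (A.mulVec u) i ≤ b i} if and only if (A.mulVec ℓ + A⁺.mulVec v) i ≤ b i for all i. Consequently, if (ℓ*, v*) is optimal for the problem of maximizing ∑_j ln (v j) subject to A ℓ + A⁺ v ≤ b, then B(ℓ*, ℓ*+v*) is a maximum-volume box contained in Ω. -/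
/-!
The linear functional `u ↦ a ⬝ᵥ u` is maximized over the box `[ℓ, ℓ + v]` at the vertex that
takes the upper end `ℓ j + v j` exactly in the coordinates where `a j ≥ 0`, with maximum value
`a ⬝ᵥ ℓ + a⁺ ⬝ᵥ v`. Applied to each row of `A` this characterizes the boxes inside `{u | A u ≤ b}`,
and since `∑ log vⱼ = log ∏ vⱼ`, maximizing the logarithmic objective maximizes the volume
(boxes with a degenerate side have volume `0`).
-/

open Matrix

def posPart' {p d : ℕ} (A : Matrix (Fin p) (Fin d) ℝ) : Matrix (Fin p) (Fin d) ℝ :=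
  Matrix.of fun i j => max (A i j) 0

lemma mul_le_mul_add_posPart_mul {a x l w : ℝ} (hlx : l ≤ x) (hxw : x ≤ l + w) :
    a * x ≤ a * l + a⁺ * w := by
  rcases le_total 0 a with ha | ha
  · rw [posPart_eq_self.2 ha, ← mul_add]
    exact mul_le_mul_of_nonneg_left hxw ha
  · rw [posPart_eq_zero.2 ha, zero_mul, add_zero]
    exact mul_le_mul_of_nonpos_left hlx ha

section Box

variable {ι : Type*}

lemma setOf_forall_le_and_le_eq_Icc (ℓ w : ι → ℝ) :
    {u : ι → ℝ | ∀ j, ℓ j ≤ u j ∧ u j ≤ w j} = Set.Icc ℓ w := by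
  ext u
  simp only [Set.mem_ofPred_eq, Set.mem_Icc, Pi.le_def, forall_and]

noncomputable def boxMaxVertex (a ℓ v : ι → ℝ) : ι → ℝ :=
  fun j => if 0 ≤ a j then ℓ j + v j else ℓ j

lemma boxMaxVertex_mem_Icc (a : ι → ℝ) {ℓ v : ι → ℝ} (hv : 0 ≤ v) :
    boxMaxVertex a ℓ v ∈ Set.Icc ℓ (ℓ + v) := by
  constructor <;> intro j <;> by_cases ha : 0 ≤ a j <;>
    simp [boxMaxVertex, ha] <;> exact hv j

variable [Fintype ι]

lemma dotProduct_le_of_mem_Icc (a : ι → ℝ) {ℓ v u : ι → ℝ} (hu : u ∈ Set.Icc ℓ (ℓ + v)) :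
    a ⬝ᵥ u ≤ a ⬝ᵥ ℓ + a⁺ ⬝ᵥ v := by
  simp only [dotProduct, ← Finset.sum_add_distrib]
  exact Finset.sum_le_sum fun j _ => mul_le_mul_add_posPart_mul (hu.1 j) (hu.2 j)

lemma dotProduct_boxMaxVertex (a ℓ v : ι → ℝ) :
    a ⬝ᵥ boxMaxVertex a ℓ v = a ⬝ᵥ ℓ + a⁺ ⬝ᵥ v := by
  simp only [dotProduct, boxMaxVertex, ← Finset.sum_add_distrib, Pi.posPart_apply]
  refine Finset.sum_congr rfl fun j _ => ?_
  by_cases ha : 0 ≤ a j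
  · rw [if_pos ha, posPart_eq_self.2 ha, mul_add]
  · rw [if_neg ha, posPart_eq_zero.2 (le_of_not_ge ha), zero_mul, add_zero]

lemma Icc_subset_setOf_mulVec_le_iff {m : Type*} (A : Matrix m ι ℝ) (b : m → ℝ)
    {ℓ v : ι → ℝ} (hv : 0 ≤ v) :
    Set.Icc ℓ (ℓ + v) ⊆ {u | ∀ i, (A *ᵥ u) i ≤ b i} ↔
      ∀ i, A i ⬝ᵥ ℓ + (A i)⁺ ⬝ᵥ v ≤ b i := by
  refine ⟨fun h i => ?_, fun h u hu i => (dotProduct_le_of_mem_Icc (A i) hu).trans (h i)⟩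
  rw [← dotProduct_boxMaxVertex]
  exact h (boxMaxVertex_mem_Icc (A i) hv) i

end Box

lemma Finset.prod_le_prod_of_sum_log_le {ι : Type*} {s : Finset ι} {v w : ι → ℝ}
    (hv : ∀ j ∈ s, 0 < v j) (hw : ∀ j ∈ s, 0 < w j)
    (h : ∑ j ∈ s, Real.log (v j) ≤ ∑ j ∈ s, Real.log (w j)) :
    ∏ j ∈ s, v j ≤ ∏ j ∈ s, w j := by
  rwa [← Real.log_le_log_iff (Finset.prod_pos hv) (Finset.prod_pos hw),
    Real.log_prod fun j hj => (hv j hj).ne', Real.log_prod fun j hj => (hw j hj).ne']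

/-- Inner-box characterization used for localized constraint tightening:
the box `B(ℓ, ℓ+v)` lies inside the polyhedron `{u | A u ≤ b}` iff
`A ℓ + A⁺ v ≤ b`; consequently an optimal solution of the log-volume program
`max ∑ ln vⱼ s.t. A ℓ + A⁺ v ≤ b` gives a maximum-volume inner box. -/
theorem box_in_polyhedron_iff_and_max_volume {p d : ℕ}
    (A : Matrix (Fin p) (Fin d) ℝ) (b : Fin p → ℝ) :
    (∀ ℓ v : Fin d → ℝ, (∀ j, 0 ≤ v j) →
      ({u : Fin d → ℝ | ∀ j, ℓ j ≤ u j ∧ u j ≤ ℓ j + v j} ⊆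
          {u : Fin d → ℝ | ∀ i, A.mulVec u i ≤ b i} ↔
        ∀ i, (A.mulVec ℓ + (posPart' A).mulVec v) i ≤ b i)) ∧
    (∀ ℓs vs : Fin d → ℝ, (∀ j, 0 < vs j) →
      (∀ i, (A.mulVec ℓs + (posPart' A).mulVec vs) i ≤ b i) →
      (∀ ℓ v : Fin d → ℝ, (∀ j, 0 < v j) →
        (∀ i, (A.mulVec ℓ + (posPart' A).mulVec v) i ≤ b i) →
        ∑ j, Real.log (v j) ≤ ∑ j, Real.log (vs j)) →
      ({u : Fin d → ℝ | ∀ j, ℓs j ≤ u j ∧ u j ≤ ℓs j + vs j} ⊆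
          {u : Fin d → ℝ | ∀ i, A.mulVec u i ≤ b i} ∧
        ∀ ℓ v : Fin d → ℝ, (∀ j, 0 ≤ v j) →
          {u : Fin d → ℝ | ∀ j, ℓ j ≤ u j ∧ u j ≤ ℓ j + v j} ⊆
            {u : Fin d → ℝ | ∀ i, A.mulVec u i ≤ b i} →
          ∏ j, v j ≤ ∏ j, vs j)) := by
  have hbox : ∀ ℓ v : Fin d → ℝ, (∀ j, 0 ≤ v j) →
      ({u : Fin d → ℝ | ∀ j, ℓ j ≤ u j ∧ u j ≤ ℓ j + v j} ⊆
          {u : Fin d → ℝ | ∀ i, A.mulVec u i ≤ b i} ↔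
        ∀ i, (A.mulVec ℓ + (posPart' A).mulVec v) i ≤ b i) := fun ℓ v hv => by
    rw [setOf_forall_le_and_le_eq_Icc]
    -- the rows of `posPart' A` are the positive parts `(A i)⁺` by definition
    exact Icc_subset_setOf_mulVec_le_iff A b hv
  refine ⟨hbox, fun ℓs vs hvs hfeas hopt =>
    ⟨(hbox ℓs vs fun j => (hvs j).le).2 hfeas, fun ℓ v hv hsub => ?_⟩⟩
  by_cases hpos : ∀ j, 0 < v j
  · exact Finset.prod_le_prod_of_sum_log_le (fun j _ => hpos j) (fun j _ => hvs j)
      (hopt ℓ v hpos ((hbox ℓ v hv).1 hsub))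
  · obtain ⟨j, hj⟩ := not_forall.1 hpos
    rw [Finset.prod_eq_zero (Finset.mem_univ j) (le_antisymm (not_lt.1 hj) (hv j))]
    exact Finset.prod_nonneg fun j _ => (hvs j).le
end
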